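/- arXiv:2105.15150 — 6 statements merged into one kernel-verified Lean document; each statement's English description precedes it below -/
import Mathlib

section
/- With X(w)=∏_{i=1}^N (w−x_i), Y(w)=∏_{i=1}^N (w−y_i) and C_{p,q} := ∑_{a,b=1}^N x_a^p y_b^q · Y(x_a)X(y_b) / ((x_a−y_b) X'(x_a) Y'(y_b)), one has C_{0,-1} = 1 − ∏_i (x_i/y_i). -/
open Finset

section Aux
open Polynomial

lemma basis_coeff_top {ι : Type*} [DecidableEq ι] (s : Finset ι) (v : ι → ℂ)
    (hvs : Set.InjOn v s) {i : ι} (hi : i ∈ s) :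
    (Lagrange.basis s v i).coeff (#s - 1) = (∏ j ∈ s.erase i, (v i - v j))⁻¹ := by
  have hnd := Lagrange.natDegree_basis hvs hi
  have hcoeff : (Lagrange.basis s v i).coeff (#s - 1) = (Lagrange.basis s v i).leadingCoeff := by
    rw [Polynomial.leadingCoeff, hnd]
  rw [hcoeff, Lagrange.basis, Polynomial.leadingCoeff_prod]
  rw [← Finset.prod_inv_distrib]
  apply Finset.prod_congr rfl
  intro j hj
  have hne : v i ≠ v j := by
    intro h
    exact (Finset.mem_erase.mp hj).1 (hvs (Finset.mem_of_mem_erase hj) hi h.symm)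
  rw [Lagrange.basisDivisor]
  have : (Polynomial.C (v i - v j)⁻¹ * (Polynomial.X - Polynomial.C (v j))).leadingCoeff
      = (v i - v j)⁻¹ * 1 := by
    rw [Polynomial.leadingCoeff_mul, Polynomial.leadingCoeff_C,
      (Polynomial.monic_X_sub_C (v j)).leadingCoeff]
  simp only [mul_one] at this
  exact this

lemma lag_key {ι : Type*} [DecidableEq ι] (s : Finset ι) (v : ι → ℂ)
    (hvs : Set.InjOn v s) (f : Polynomial ℂ) (hf : f.degree < #s) :
    ∑ i ∈ s, f.eval (v i) / (∏ j ∈ s.erase i, (v i - v j)) = f.coeff (#s - 1) := by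
  have hf' := Lagrange.eq_interpolate hvs hf
  conv_rhs => rw [hf']
  rw [Lagrange.interpolate_apply, Polynomial.finset_sum_coeff]
  apply Finset.sum_congr rfl
  intro i hi
  rw [Polynomial.coeff_C_mul, basis_coeff_top s v hvs hi, div_eq_mul_inv]

lemma prod_erase_option_none {α : Type*} [Fintype α] [DecidableEq α] (g : Option α → ℂ) :
    ∏ j ∈ (univ : Finset (Option α)).erase none, g j = ∏ j, g (some j) := by
  have h : (univ : Finset (Option α)).erase none = univ.map Function.Embedding.some := by
    ext o; cases o <;> simp
  rw [h, Finset.prod_map]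
  rfl

lemma prod_erase_option_some {α : Type*} [Fintype α] [DecidableEq α] (g : Option α → ℂ) (a : α) :
    ∏ j ∈ (univ : Finset (Option α)).erase (some a), g j
      = g none * ∏ j ∈ univ.erase a, g (some j) := by
  have h : (univ : Finset (Option α)).erase (some a)
      = insert none ((univ.erase a).map Function.Embedding.some) := by
    ext o; cases o <;> simp
  rw [h, Finset.prod_insert (by simp), Finset.prod_map]
  rfl

lemma resB (N : ℕ) (x y : Fin N → ℂ) (hxinj : Function.Injective x) (hx : ∀ i, x i ≠ 0) :
    (∏ i, ((0:ℂ) - y i)) / (∏ j, ((0:ℂ) - x j))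
      + ∑ a, (∏ i, (x a - y i)) / ((x a - 0) * ∏ j ∈ univ.erase a, (x a - x j)) = 1 := by
  classical
  set v : Option (Fin N) → ℂ := fun o => o.elim 0 x with hv
  have hvinj : Function.Injective v := by
    intro o1 o2 h
    cases o1 <;> cases o2 <;> simp [hv] at h ⊢
    · exact (hx _ h.symm).elim
    · exact (hx _ h).elim
    · exact hxinj h
  have hcard : #(univ : Finset (Option (Fin N))) = N + 1 := by simp
  have key := lag_key (univ : Finset (Option (Fin N))) v hvinj.injOn
    (Lagrange.nodal univ y) (by
      rw [Lagrange.degree_nodal, hcard]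
      exact_mod_cast Nat.lt_succ_of_le (by simp))
  rw [hcard] at key
  simp only [Nat.add_sub_cancel] at key
  have hc : (Lagrange.nodal (univ : Finset (Fin N)) y).coeff N = 1 := by
    have hm := Lagrange.nodal_monic (s := (univ : Finset (Fin N))) (v := y)
    have hnd : (Lagrange.nodal (univ : Finset (Fin N)) y).natDegree = N := by
      rw [Lagrange.natDegree_nodal]; simp
    have h2 := hm.coeff_natDegree
    rwa [hnd] at h2
  rw [hc] at key
  rw [Fintype.sum_option] at key
  rw [prod_erase_option_none] at key
  convert key using 2
  · simp [hv, Lagrange.eval_nodal]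
  · apply Finset.sum_congr rfl
    intro a _
    rw [prod_erase_option_some]
    simp [hv, Lagrange.eval_nodal]

lemma resA (N : ℕ) (x y : Fin N → ℂ) (a : Fin N) (hyinj : Function.Injective y)
    (hy : ∀ j, y j ≠ 0) (hxa : x a ≠ 0) (hxy : ∀ j, x a ≠ y j) :
    (∏ i, ((0:ℂ) - x i)) / ((0 - x a) * ∏ j, ((0:ℂ) - y j))
      + ∑ b, (∏ i, (y b - x i)) / ((y b - x a) * ((y b - 0) * ∏ j ∈ univ.erase b, (y b - y j)))
      = 0 := by
  classical
  set v : Option (Option (Fin N)) → ℂ := fun o => o.elim (x a) (fun o' => o'.elim 0 y) with hv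
  have hvinj : Function.Injective v := by
    intro o1 o2 h
    cases o1 with
    | none => cases o2 with
      | none => rfl
      | some o2' => cases o2' <;> simp [hv] at h <;> [exact (hxa h).elim; exact (hxy _ h).elim]
    | some o1' => cases o2 with
      | none => cases o1' <;> simp [hv] at h <;>
          [exact (hxa h.symm).elim; exact (hxy _ h.symm).elim]
      | some o2' =>
          cases o1' <;> cases o2' <;> simp [hv] at h ⊢
          · exact (hy _ h.symm).elim
          · exact (hy _ h).elim
          · exact hyinj h
  have hcard : #(univ : Finset (Option (Option (Fin N)))) = N + 2 := by simp
  have key := lag_key (univ : Finset (Option (Option (Fin N)))) v hvinj.injOn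
    (Lagrange.nodal univ x) (by
      rw [Lagrange.degree_nodal, hcard]
      exact_mod_cast Nat.lt_succ_of_le (by simp [Nat.le_succ]))
  rw [hcard] at key
  have h21 : N + 2 - 1 = N + 1 := rfl
  rw [h21] at key
  have hc : (Lagrange.nodal (univ : Finset (Fin N)) x).coeff (N + 1) = 0 := by
    apply Polynomial.coeff_eq_zero_of_natDegree_lt
    rw [Lagrange.natDegree_nodal]; simp
  rw [hc] at key
  rw [Fintype.sum_option, Fintype.sum_option] at key
  have hz : Polynomial.eval (v none) (Lagrange.nodal univ x) = 0 := by
    simp only [hv, Option.elim]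
    exact Lagrange.eval_nodal_at_node (Finset.mem_univ a)
  rw [hz, zero_div, zero_add] at key
  rw [prod_erase_option_some, prod_erase_option_none] at key
  convert key using 2
  · simp [hv, Lagrange.eval_nodal, mul_comm]
  · apply Finset.sum_congr rfl
    intro b _
    rw [prod_erase_option_some, prod_erase_option_some]
    simp [hv, Lagrange.eval_nodal]

end Aux

/-- `C_{p,q} = ∑_{a,b} x_a^p y_b^q · Y(x_a) X(y_b) / ((x_a−y_b) X'(x_a) Y'(y_b))`
where `Y(x_a) = ∏ᵢ (x_a − yᵢ)`, `X(y_b) = ∏ᵢ (y_b − xᵢ)`,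
`X'(x_a) = ∏_{i≠a} (x_a − xᵢ)`, `Y'(y_b) = ∏_{i≠b}(y_b − yᵢ)`. -/
noncomputable def Cpq {N : ℕ} (x y : Fin N → ℂ) (p q : ℤ) : ℂ :=
  ∑ a, ∑ b, x a ^ p * y b ^ q *
    (∏ i, (x a - y i)) * (∏ i, (y b - x i)) /
    ((x a - y b) * (∏ i ∈ Finset.univ.erase a, (x a - x i)) *
      (∏ i ∈ Finset.univ.erase b, (y b - y i)))

theorem stmt1 (N : ℕ) (x y : Fin N → ℂ)
    (hxinj : Function.Injective x) (hyinj : Function.Injective y)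
    (hx : ∀ i, x i ≠ 0) (hy : ∀ j, y j ≠ 0)
    (hxy : ∀ i j, x i ≠ y j) :
    Cpq x y 0 (-1) = 1 - ∏ i, x i / y i := by
  classical
  have hX0 : (∏ i, ((0:ℂ) - x i)) ≠ 0 :=
    Finset.prod_ne_zero_iff.mpr fun i _ => sub_ne_zero.mpr (Ne.symm (hx i))
  have hY0 : (∏ i, ((0:ℂ) - y i)) ≠ 0 :=
    Finset.prod_ne_zero_iff.mpr fun i _ => sub_ne_zero.mpr (Ne.symm (hy i))
  have hXd : ∀ a, (∏ j ∈ univ.erase a, (x a - x j)) ≠ 0 := fun a =>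
    Finset.prod_ne_zero_iff.mpr fun j hj =>
      sub_ne_zero.mpr fun h => (Finset.mem_erase.mp hj).1 (hxinj h).symm
  have hYd : ∀ b, (∏ j ∈ univ.erase b, (y b - y j)) ≠ 0 := fun b =>
    Finset.prod_ne_zero_iff.mpr fun j hj =>
      sub_ne_zero.mpr fun h => (Finset.mem_erase.mp hj).1 (hyinj h).symm
  have inner : ∀ a : Fin N,
      (∑ b, x a ^ (0:ℤ) * y b ^ (-1:ℤ) * (∏ i, (x a - y i)) * (∏ i, (y b - x i)) /
        ((x a - y b) * (∏ i ∈ univ.erase a, (x a - x i)) * (∏ i ∈ univ.erase b, (y b - y i))))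
      = -((∏ i, ((0:ℂ) - x i)) / (∏ i, ((0:ℂ) - y i))) *
        ((∏ i, (x a - y i)) / ((x a - 0) * ∏ j ∈ univ.erase a, (x a - x j))) := by
    intro a
    have hA := resA N x y a hyinj hy (hx a) (fun j => hxy a j)
    have hsum := eq_neg_of_add_eq_zero_right hA
    have hstep : (∑ b, x a ^ (0:ℤ) * y b ^ (-1:ℤ) * (∏ i, (x a - y i)) * (∏ i, (y b - x i)) /
        ((x a - y b) * (∏ i ∈ univ.erase a, (x a - x i)) * (∏ i ∈ univ.erase b, (y b - y i))))
        = -((∏ i, (x a - y i)) / (∏ j ∈ univ.erase a, (x a - x j))) *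
          ∑ b, (∏ i, (y b - x i)) /
            ((y b - x a) * ((y b - 0) * ∏ j ∈ univ.erase b, (y b - y j))) := by
      rw [Finset.mul_sum]
      apply Finset.sum_congr rfl
      intro b _
      have h1 : x a - y b ≠ 0 := sub_ne_zero.mpr (hxy a b)
      have h2 : y b - x a ≠ 0 := sub_ne_zero.mpr (Ne.symm (hxy a b))
      have h3 : y b - 0 ≠ 0 := by simpa using hy b
      have h4 : y b ≠ 0 := hy b
      have h5 := hXd a
      have h6 := hYd b
      field_simp
      ring
    rw [hstep, hsum]
    simp only [zero_sub, sub_zero, neg_mul, div_neg, neg_neg, mul_neg]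
    ring
  have hB := resB N x y hxinj hx
  have hBsum : (∑ a, (∏ i, (x a - y i)) / ((x a - 0) * ∏ j ∈ univ.erase a, (x a - x j)))
      = 1 - (∏ i, ((0:ℂ) - y i)) / (∏ j, ((0:ℂ) - x j)) := by
    linear_combination hB
  have hprod : (∏ i, x i / y i) = (∏ i, ((0:ℂ) - x i)) / (∏ i, ((0:ℂ) - y i)) := by
    rw [← Finset.prod_div_distrib]
    apply Finset.prod_congr rfl
    intro i _
    rw [zero_sub, zero_sub, neg_div_neg_eq]
  unfold Cpq
  calc (∑ a, ∑ b, x a ^ (0:ℤ) * y b ^ (-1:ℤ) * (∏ i, (x a - y i)) * (∏ i, (y b - x i)) /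
        ((x a - y b) * (∏ i ∈ univ.erase a, (x a - x i)) * (∏ i ∈ univ.erase b, (y b - y i))))
      = ∑ a, -((∏ i, ((0:ℂ) - x i)) / (∏ i, ((0:ℂ) - y i))) *
          ((∏ i, (x a - y i)) / ((x a - 0) * ∏ j ∈ univ.erase a, (x a - x j))) :=
        Finset.sum_congr rfl fun a _ => inner a
    _ = -((∏ i, ((0:ℂ) - x i)) / (∏ i, ((0:ℂ) - y i))) *
          (1 - (∏ i, ((0:ℂ) - y i)) / (∏ j, ((0:ℂ) - x j))) := by
        rw [← Finset.mul_sum, hBsum]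
    _ = 1 - ∏ i, x i / y i := by
        rw [hprod]
        have hts : ((∏ i, ((0:ℂ) - x i)) / (∏ i, ((0:ℂ) - y i))) *
            ((∏ i, ((0:ℂ) - y i)) / (∏ i, ((0:ℂ) - x i))) = 1 := by
          rw [div_mul_div_comm, mul_comm, div_self (mul_ne_zero hY0 hX0)]
        linear_combination hts
end

section
/- With the notation C_{p,q} := ∑_{a,b=1}^N x_a^p y_b^q · Y(x_a)X(y_b) / ((x_a−y_b) X'(x_a) Y'(y_b)), one has C_{0,1} = Ĥ(X;Y) and C_{1,0} = −Ĥ(Y;X), where Ĥ(X;Y) = (1/2)(∑_i x_i − ∑_i y_i)^2 − (1/2)(∑_i x_i^2 − ∑_i y_i^2). -/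
/-!
Summing over `a` first, `∑_a Y(x_a) / ((x_a - y_b) X'(x_a))` is the Lagrange formula for the
coefficient of `z^(N-1)` in the monic polynomial `Y(z) / (z - y_b)` of degree `N - 1`, so it is `1`
and `C_{0,1} = ∑_b y_b X(y_b) / Y'(y_b)`. On the nodes `y_b` the numerator agrees with
`P(z) = z (X(z) - Y(z))`, of degree at most `N`, and for such `P` the Lagrange sum equals
`P_{N-1} + P_N ∑_b y_b`. These two coefficients of `P` come from Vieta's formulas and Newton's
identity `2 e₂ = p₁² - p₂`. Exchanging `x` and `y` only changes the sign of `C`, which gives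
`C_{1,0}`.
-/

open Finset

/-- `Ĥ(X;Y) = (1/2)(∑ xᵢ − ∑ yᵢ)² − (1/2)(∑ xᵢ² − ∑ yᵢ²)`. -/
noncomputable def Hhat {N : ℕ} (W W' : Fin N → ℂ) : ℂ :=
  (1 / 2) * ((∑ i, W i) - ∑ i, W' i) ^ 2 - (1 / 2) * ((∑ i, (W i) ^ 2) - ∑ i, (W' i) ^ 2)

open Polynomial

theorem Multiset.two_mul_esymm_two {R : Type*} [CommRing R] (m : Multiset R) :
    2 * m.esymm 2 = m.sum ^ 2 - (m.map (· ^ 2)).sum := by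
  induction m using Multiset.induction_on with
  | empty => simp [Multiset.esymm, Multiset.powersetCard_zero_right]
  | cons a m ih =>
    have h : (a ::ₘ m).esymm 2 = m.esymm 2 + a * m.sum := by
      rw [Multiset.esymm, Multiset.esymm, Multiset.powersetCard_cons, Multiset.map_add,
        Multiset.sum_add, Multiset.powersetCard_one, Multiset.map_map, Multiset.map_map,
        add_right_inj]
      simpa using Multiset.sum_map_mul_left (a := a) (s := m) (f := id)
    rw [h, Multiset.sum_cons, Multiset.map_cons, Multiset.sum_cons]
    linear_combination ih

namespace Lagrange

theorem two_mul_coeff_X_mul_nodal {R ι : Type*} [CommRing R] (s : Finset ι) (v : ι → R) :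
    2 * (X * nodal s v).coeff (#s - 1) = (∑ i ∈ s, v i) ^ 2 - ∑ i ∈ s, v i ^ 2 := by
  rcases s.eq_empty_or_nonempty with rfl | hs
  · simp
  have h : X * nodal s v = (((0 : R) ::ₘ s.val.map v).map fun t => X - C t).prod := by
    rw [nodal, Finset.prod, Multiset.map_cons, Multiset.prod_cons, Multiset.map_map, map_zero,
      sub_zero]
    rfl
  have hcard : Multiset.card ((0 : R) ::ₘ s.val.map v) = #s + 1 := by simp
  have hs' : #s + 1 - (#s - 1) = 2 := by have := hs.card_pos; omega
  rw [h, Multiset.prod_X_sub_C_coeff _ (by omega), hcard, hs', neg_one_sq, one_mul,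
    Multiset.two_mul_esymm_two]
  simp [Multiset.map_map]

theorem sum_eval_div_prod_erase_of_degree_le {F ι : Type*} [Field F] [DecidableEq ι]
    {s : Finset ι} {v : ι → F} (hvs : Set.InjOn v s) (hs : s.Nonempty) {P : F[X]}
    (hP : P.degree ≤ #s) :
    ∑ i ∈ s, P.eval (v i) / ∏ j ∈ s.erase i, (v i - v j)
      = P.coeff (#s - 1) + P.coeff #s * ∑ i ∈ s, v i := by
  set Q := P - C (P.coeff #s) * nodal s v
  have hQ : Q.degree < #s := by
    rw [degree_lt_iff_coeff_zero]
    intro m hm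
    simp only [Q, coeff_sub, coeff_C_mul]
    rcases hm.eq_or_lt with rfl | hlt
    · have h := (nodal_monic (s := s) (v := v)).coeff_natDegree
      rw [natDegree_nodal] at h
      rw [h, mul_one, sub_self]
    · rw [coeff_eq_zero_of_degree_lt (n := m) (hP.trans_lt (by exact_mod_cast hlt)),
        coeff_eq_zero_of_natDegree_lt (p := nodal s v) (by rwa [natDegree_nodal]), mul_zero,
        sub_zero]
  calc ∑ i ∈ s, P.eval (v i) / ∏ j ∈ s.erase i, (v i - v j)
      = ∑ i ∈ s, Q.eval (v i) / ∏ j ∈ s.erase i, (v i - v j) :=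
        sum_congr rfl fun i hi => by simp [Q, eval_nodal_at_node hi]
    _ = Q.coeff (#s - 1) := (coeff_eq_sum hvs hQ).symm
    _ = P.coeff (#s - 1) + P.coeff #s * ∑ i ∈ s, v i := by
        simp only [Q, coeff_sub, coeff_C_mul, nodal_eq,
          prod_X_sub_C_coeff_card_pred s v hs.card_pos]
        ring

end Lagrange

open Lagrange

theorem Cpq_zero_left {N : ℕ} {x y : Fin N → ℂ} (hx : Function.Injective x)
    (hxy : ∀ i j, x i ≠ y j) (q : ℤ) :
    Cpq x y 0 q = ∑ b, y b ^ q * (∏ i, (y b - x i)) / ∏ i ∈ univ.erase b, (y b - y i) := by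
  rw [Cpq, sum_comm]
  refine sum_congr rfl fun b _ => ?_
  have hdeg : (nodal (univ.erase b) y).degree < #(univ : Finset (Fin N)) := by
    rw [degree_nodal, card_erase_of_mem (mem_univ b)]
    exact_mod_cast Nat.sub_lt (card_pos.mpr ⟨b, mem_univ b⟩) one_pos
  have hone : ∑ a, (∏ i ∈ univ.erase b, (x a - y i)) / ∏ i ∈ univ.erase a, (x a - x i) = 1 := by
    have h := (nodal_monic (s := univ.erase b) (v := y)).coeff_natDegree
    rw [natDegree_nodal, card_erase_of_mem (mem_univ b), coeff_eq_sum hx.injOn hdeg] at h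
    simpa [eval_nodal] using h
  calc _ = ∑ a, y b ^ q * (∏ i, (y b - x i)) / (∏ i ∈ univ.erase b, (y b - y i)) *
        ((∏ i ∈ univ.erase b, (x a - y i)) / ∏ i ∈ univ.erase a, (x a - x i)) := by
        refine sum_congr rfl fun a _ => ?_
        have hab : x a - y b ≠ 0 := sub_ne_zero.mpr (hxy a b)
        rw [← mul_prod_erase univ (fun i => x a - y i) (mem_univ b), zpow_zero, one_mul]
        field_simp
    _ = _ := by rw [← mul_sum, hone, mul_one]

theorem Cpq_zero_one {N : ℕ} {x y : Fin N → ℂ} (hx : Function.Injective x)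
    (hy : Function.Injective y) (hxy : ∀ i j, x i ≠ y j) :
    Cpq x y 0 1 = Hhat x y := by
  obtain _ | n := N
  · simp [Cpq, Hhat]
  have hcard : #(univ : Finset (Fin (n + 1))) = n + 1 := by simp
  have hcoeff (v : Fin (n + 1) → ℂ) : (nodal univ v).coeff n = -∑ i, v i := by
    simpa [nodal_eq] using prod_X_sub_C_coeff_card_pred univ v (by simp)
  have hcoeffX (v : Fin (n + 1) → ℂ) :
      2 * (X * nodal univ v).coeff n = (∑ i, v i) ^ 2 - ∑ i, v i ^ 2 := by
    simpa using two_mul_coeff_X_mul_nodal univ v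
  set P : ℂ[X] := X * (nodal univ x - nodal univ y) with hP
  have hdiff : (nodal univ x - nodal univ y).degree < ↑(n + 1) := by
    have := degree_sub_lt_left (p := nodal univ x) (q := nodal univ y)
      (by simp only [degree_nodal]) nodal_ne_zero (by simp only [nodal_monic.leadingCoeff])
    rwa [degree_nodal, hcard] at this
  have hPdeg : P.degree ≤ #(univ : Finset (Fin (n + 1))) := by
    rw [hP, X_mul, degree_mul_X, hcard]
    exact Nat.WithBot.add_one_le_of_lt hdiff
  have hPeval (b : Fin (n + 1)) : P.eval (y b) = y b ^ (1 : ℤ) * ∏ i, (y b - x i) := by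
    simp [hP, eval_nodal_at_node (mem_univ b), eval_nodal]
  have htop : P.coeff (n + 1) = ∑ i, y i - ∑ i, x i := by
    rw [hP, coeff_X_mul, coeff_sub, hcoeff, hcoeff]
    ring
  have hnext : 2 * P.coeff n
      = ((∑ i, x i) ^ 2 - ∑ i, x i ^ 2) - ((∑ i, y i) ^ 2 - ∑ i, y i ^ 2) := by
    rw [hP, mul_sub, coeff_sub, mul_sub, hcoeffX, hcoeffX]
  calc Cpq x y 0 1
      = ∑ b, P.eval (y b) / ∏ i ∈ univ.erase b, (y b - y i) := by
        simp only [Cpq_zero_left hx hxy, hPeval]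
    _ = Hhat x y := by
        rw [sum_eval_div_prod_erase_of_degree_le hy.injOn univ_nonempty hPdeg, hcard,
          Nat.add_sub_cancel, htop, Hhat]
        linear_combination hnext / 2

theorem Cpq_swap {N : ℕ} (x y : Fin N → ℂ) (p q : ℤ) : Cpq x y p q = -Cpq y x q p := by
  rw [Cpq, Cpq, sum_comm, ← sum_neg_distrib]
  refine sum_congr rfl fun a _ => ?_
  rw [← sum_neg_distrib]
  refine sum_congr rfl fun b _ => ?_
  rw [← neg_sub (x b) (y a), neg_mul, neg_mul, div_neg]
  ring

theorem stmt3 (N : ℕ) (x y : Fin N → ℂ)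
    (hxinj : Function.Injective x) (hyinj : Function.Injective y)
    (hxy : ∀ i j, x i ≠ y j) :
    Cpq x y 0 1 = Hhat x y ∧ Cpq x y 1 0 = -Hhat y x :=
  ⟨Cpq_zero_one hxinj hyinj hxy, by
    rw [Cpq_swap, Cpq_zero_one hyinj hxinj fun i j => (hxy j i).symm]⟩
end

section
/- With the notation C_{p,q} := ∑_{a,b=1}^N x_a^p y_b^q · Y(x_a)X(y_b) / ((x_a−y_b) X'(x_a) Y'(y_b)), one has C_{-1,1} − C_{0,0} = (1 − ∏_i y_i/x_i) · ∑_i (x_i − y_i). -/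
/-!
Each `C_{p,q}` factors as `∑_a x_a^p Y(x_a)/X'(x_a) · S_q(a)` with
`S_q(a) = ∑_b y_b^q X(y_b) / ((x_a - y_b) Y'(y_b))`, and `S_q(a)` is a partial-fraction sum at the
nodes `y`: for `deg f < N`, `f(w)/Y(w) = ∑_b f(y_b) / ((w - y_b) Y'(y_b))`. Taking `f = X - Y`
gives `S_0(a) = -1`; taking `f(w) = w X(w) - (w - ∑x + ∑y) Y(w)`, whose two monic terms agree in
their two leading coefficients, gives `S_1(a) = ∑x - ∑y - x_a`. So the difference is
`(∑x - ∑y) ∑_a Y(x_a) / (x_a X'(x_a))`, and the same expansion at the nodes `x`, for `f = X - Y`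
at `w = 0`, evaluates this last sum as `1 - Y(0)/X(0) = 1 - ∏ y_i/x_i`.
-/

open Finset

open Polynomial Lagrange

theorem Polynomial.degree_sub_lt_of_nextCoeff_eq {R : Type*} [Ring R] {p q : R[X]} {n : ℕ}
    (hp : p.Monic) (hq : q.Monic) (hpn : p.natDegree = n + 1) (hqn : q.natDegree = n + 1)
    (h : p.nextCoeff = q.nextCoeff) : (p - q).degree < n := by
  rw [degree_lt_iff_coeff_zero]
  intro m hm
  rw [coeff_sub, sub_eq_zero]
  rcases hm.eq_or_lt with rfl | hnm
  · simpa [nextCoeff_of_natDegree_pos, hpn, hqn] using h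
  rcases (Nat.succ_le_of_lt hnm : n + 1 ≤ m).eq_or_lt with rfl | hnm'
  · rw [Nat.succ_eq_add_one, ← hpn, hp.coeff_natDegree, hpn, ← hqn, hq.coeff_natDegree]
  · rw [coeff_eq_zero_of_natDegree_lt (hpn ▸ hnm'), coeff_eq_zero_of_natDegree_lt (hqn ▸ hnm')]

section

variable {K ι : Type*} [Field K]

theorem Lagrange.degree_nodal_sub_nodal_lt (s : Finset ι) (x y : ι → K) :
    (nodal s x - nodal s y).degree < #s := by
  rw [← degree_nodal (v := x)]
  exact degree_sub_lt_left (by rw [degree_nodal, degree_nodal]) nodal_ne_zero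
    (by rw [nodal_monic.leadingCoeff, nodal_monic.leadingCoeff])

variable [DecidableEq ι]

theorem Lagrange.eval_div_prod_sub_eq_sum {s : Finset ι} {v : ι → K} (hvs : Set.InjOn v s)
    {f : K[X]} (hf : f.degree < #s) {w : K} (hw : ∀ i ∈ s, w ≠ v i) :
    f.eval w / ∏ i ∈ s, (w - v i) =
      ∑ i ∈ s, f.eval (v i) / ((w - v i) * ∏ j ∈ s.erase i, (v i - v j)) := by
  have hbary := eval_interpolate_not_at_node (fun i => f.eval (v i)) hw
  rw [← eq_interpolate hvs hf, eval_nodal] at hbary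
  have hprod : ∏ i ∈ s, (w - v i) ≠ 0 := prod_ne_zero_iff.mpr fun i hi => sub_ne_zero.mpr (hw i hi)
  rw [hbary, mul_div_cancel_left₀ _ hprod]
  refine sum_congr rfl fun i _ => ?_
  rw [nodalWeight, prod_inv_distrib, div_eq_mul_inv, mul_inv]
  ring

variable [Fintype ι] {x y : ι → K}

theorem sum_prod_sub_div_eq_neg_one (hy : Function.Injective y) {a : ι} (hxa : ∀ j, x a ≠ y j) :
    ∑ b, (∏ i, (y b - x i)) / ((x a - y b) * ∏ i ∈ univ.erase b, (y b - y i)) = -1 := by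
  have h := eval_div_prod_sub_eq_sum hy.injOn (degree_nodal_sub_nodal_lt univ x y)
    (w := x a) fun j _ => hxa j
  simp only [eval_sub, eval_nodal_at_node (mem_univ _), sub_zero, zero_sub, eval_nodal] at h
  have hY : ∏ i, (x a - y i) ≠ 0 := prod_ne_zero_iff.mpr fun i _ => sub_ne_zero.mpr (hxa i)
  rw [← h, neg_div, div_self hY]

theorem sum_mul_prod_sub_div_eq (hy : Function.Injective y) {a : ι} (hxa : ∀ j, x a ≠ y j) :
    ∑ b, y b * (∏ i, (y b - x i)) / ((x a - y b) * ∏ i ∈ univ.erase b, (y b - y i)) =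
      ∑ i, x i - ∑ i, y i - x a := by
  set c := ∑ i, x i - ∑ i, y i
  have hdeg : (X * nodal univ x - (X - C c) * nodal univ y).degree <
      (#(univ : Finset ι) : WithBot ℕ) := by
    refine degree_sub_lt_of_nextCoeff_eq (monic_X.mul nodal_monic)
      ((monic_X_sub_C c).mul nodal_monic) ?_ ?_ ?_
    · rw [monic_X.natDegree_mul nodal_monic, natDegree_X, natDegree_nodal, add_comm]
    · rw [(monic_X_sub_C c).natDegree_mul nodal_monic, natDegree_X_sub_C, natDegree_nodal, add_comm]
    · rw [monic_X.nextCoeff_mul nodal_monic, (monic_X_sub_C c).nextCoeff_mul nodal_monic,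
        nextCoeff_X_sub_C, nodal, nodal, prod_X_sub_C_nextCoeff, prod_X_sub_C_nextCoeff,
        show (X : K[X]).nextCoeff = 0 by simp [nextCoeff]]
      simp only [c]
      ring
  have h := eval_div_prod_sub_eq_sum hy.injOn hdeg (w := x a) fun j _ => hxa j
  simp only [eval_sub, eval_mul, eval_X, eval_C, eval_nodal_at_node (mem_univ _), mul_zero,
    sub_zero, zero_sub, eval_nodal] at h
  have hY : ∏ i, (x a - y i) ≠ 0 := prod_ne_zero_iff.mpr fun i _ => sub_ne_zero.mpr (hxa i)
  rw [← h, neg_div, mul_div_cancel_right₀ _ hY, neg_sub]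

theorem sum_prod_sub_div_mul_eq (hx : Function.Injective x) (hx0 : ∀ i, x i ≠ 0) :
    ∑ a, (∏ i, (x a - y i)) / (x a * ∏ i ∈ univ.erase a, (x a - x i)) = 1 - ∏ i, y i / x i := by
  have h := eval_div_prod_sub_eq_sum hx.injOn (degree_nodal_sub_nodal_lt univ x y)
    (w := 0) fun i _ => (hx0 i).symm
  simp only [eval_sub, eval_nodal_at_node (mem_univ _), eval_nodal, zero_sub, neg_mul,
    neg_div_neg_eq] at h
  have hX : ∏ i, -x i ≠ 0 := prod_ne_zero_iff.mpr fun i _ => neg_ne_zero.mpr (hx0 i)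
  rw [← h, sub_div, div_self hX, ← prod_div_distrib]
  simp_rw [neg_div_neg_eq]

end

theorem Cpq_eq_sum_mul_sum {N : ℕ} (x y : Fin N → ℂ) (p q : ℤ) :
    Cpq x y p q = ∑ a, x a ^ p * (∏ i, (x a - y i)) / (∏ i ∈ univ.erase a, (x a - x i)) *
      ∑ b, y b ^ q * (∏ i, (y b - x i)) / ((x a - y b) * ∏ i ∈ univ.erase b, (y b - y i)) := by
  refine sum_congr rfl fun a _ => ?_
  rw [mul_sum]
  refine sum_congr rfl fun b _ => ?_
  rw [div_mul_div_comm]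
  congr 1 <;> ring

theorem stmt4_general (N : ℕ) (x y : Fin N → ℂ)
    (hxinj : Function.Injective x) (hyinj : Function.Injective y)
    (hx : ∀ i, x i ≠ 0)
    (hxy : ∀ i j, x i ≠ y j) :
    Cpq x y (-1) 1 - Cpq x y 0 0 = (1 - ∏ i, y i / x i) * ∑ i, (x i - y i) := by
  rw [Cpq_eq_sum_mul_sum, Cpq_eq_sum_mul_sum, ← sum_sub_distrib,
    ← sum_prod_sub_div_mul_eq hxinj hx, sum_sub_distrib (f := x), sum_mul]
  refine sum_congr rfl fun a _ => ?_
  simp only [zpow_neg_one, zpow_one, zpow_zero, one_mul]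
  rw [sum_mul_prod_sub_div_eq hyinj (hxy a), sum_prod_sub_div_eq_neg_one hyinj (hxy a)]
  field_simp [hx a]
  ring

theorem stmt4 (N : ℕ) (x y : Fin N → ℂ)
    (hxinj : Function.Injective x) (hyinj : Function.Injective y)
    (hx : ∀ i, x i ≠ 0) (hy : ∀ j, y j ≠ 0)
    (hxy : ∀ i j, x i ≠ y j) :
    Cpq x y (-1) 1 - Cpq x y 0 0 = (1 - ∏ i, y i / x i) * ∑ i, (x i - y i) :=
  stmt4_general N x y hxinj hyinj hx hxy
end

section
/- For nonzero complex numbers x_1,...,x_N, y_1,...,y_N with x_i ≠ y_j for all i,j, and any complex u, det[ 1/(y_j − x_i) + u/x_i ]_{i,j=1}^N = det[ 1/(y_j − x_i) ]_{i,j=1}^N · ( 1 + u·(−1 + ∏_{i=1}^N y_i/x_i) ). -/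
/-!
Expanding the determinant multilinearly in the rows shows that a rank-one perturbation
`A + u • vecMulVec c r` has determinant affine in `u`: every term using the row `r` twice
vanishes. So it suffices to know the determinant at `u = 0` and at `u = 1`, and at `u = 1` the
Cauchy matrix becomes `1 / (y j - x i) + 1 / x i = (x i)⁻¹ * y j / (y j - x i)`, a diagonal
rescaling of rows and columns.
-/

open Finset

namespace Matrix

variable {n R : Type*} [Fintype n] [DecidableEq n] [CommRing R]

theorem det_add_vecMulVec_eq_sum (A : Matrix n n R) (c r : n → R) :
    det (A + vecMulVec c r) =
      ∑ s : Finset n, (∏ i ∈ s, c i) * det (of (s.piecewise (fun _ => r) (A ·))) := by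
  have hrows : A + vecMulVec c r = of ((fun i => c i • r) + (A ·)) := by
    ext i j
    simp [vecMulVec_apply, add_comm]
  rw [hrows]
  refine (detRowAlternating.map_add_univ _ _).trans (sum_congr rfl fun s _ => ?_)
  have hpiece : s.piecewise (fun i => c i • r) (A ·) =
      s.piecewise (fun i => c i • s.piecewise (fun _ => r) (A ·) i)
        (s.piecewise (fun _ => r) (A ·)) := by
    funext i
    by_cases hi : i ∈ s <;> simp [hi]
  rw [hpiece]
  exact detRowAlternating.map_piecewise_smul c _ s

theorem det_piecewise_eq_zero_of_two_le_card (A : Matrix n n R) (r : n → R) {s : Finset n}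
    (hs : 2 ≤ s.card) : det (of (s.piecewise (fun _ => r) (A ·))) = 0 := by
  obtain ⟨i, hi, k, hk, hik⟩ := one_lt_card.mp hs
  exact det_zero_of_row_eq hik (funext fun j => by simp [hi, hk])

theorem det_add_smul_vecMulVec (A : Matrix n n R) (c r : n → R) (u : R) :
    det (A + u • vecMulVec c r) = (1 - u) * det A + u * det (A + vecMulVec c r) := by
  have expand (v : R) : det (A + v • vecMulVec c r) = ∑ s : Finset n,
      v ^ s.card * ((∏ i ∈ s, c i) * det (of (s.piecewise (fun _ => r) (A ·)))) := by
    rw [← smul_vecMulVec, det_add_vecMulVec_eq_sum]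
    simp only [Pi.smul_apply, smul_eq_mul, prod_mul_distrib, prod_const, mul_assoc]
  have h0 := expand 0
  have h1 := expand 1
  rw [zero_smul, add_zero] at h0
  rw [one_smul] at h1
  rw [expand, h0, h1, mul_sum, mul_sum, ← sum_add_distrib]
  refine sum_congr rfl fun s _ => ?_
  rcases Nat.lt_or_ge s.card 2 with hs | hs
  · interval_cases s.card <;> ring
  · rw [det_piecewise_eq_zero_of_two_le_card A r hs]
    ring

end Matrix

open Matrix in
theorem det_cauchy_add_vecMulVec_inv {N : ℕ} (x y : Fin N → ℂ) (hx : ∀ i, x i ≠ 0)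
    (hxy : ∀ i j, x i ≠ y j) :
    det (of (fun i j : Fin N => 1 / (y j - x i)) + vecMulVec (fun i => 1 / x i) 1)
      = (∏ i, y i / x i) * det (of fun i j : Fin N => 1 / (y j - x i)) := by
  set C : Matrix (Fin N) (Fin N) ℂ := of fun i j => 1 / (y j - x i) with hC
  have hentry : C + vecMulVec (fun i => 1 / x i) 1
      = of fun i j => (x i)⁻¹ * (of fun i j => y j * C i j) i j := by
    ext i j
    have hne : y j - x i ≠ 0 := sub_ne_zero.mpr (hxy i j).symm
    simp only [hC, Matrix.add_apply, of_apply, vecMulVec_apply, Pi.one_apply]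
    field_simp [hx i]
    ring
  rw [hentry, det_mul_column, det_mul_row, ← mul_assoc, ← prod_mul_distrib]
  simp only [div_eq_mul_inv, mul_comm]

theorem stmt7_general (N : ℕ) (x y : Fin N → ℂ)
    (hx : ∀ i, x i ≠ 0)
    (hxy : ∀ i j, x i ≠ y j) (u : ℂ) :
    Matrix.det (Matrix.of fun i j : Fin N => 1 / (y j - x i) + u / x i)
    = Matrix.det (Matrix.of fun i j : Fin N => 1 / (y j - x i)) *
      (1 + u * (-1 + ∏ i, y i / x i)) := by
  have hrank_one : (Matrix.of fun i j : Fin N => 1 / (y j - x i) + u / x i) =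
      Matrix.of (fun i j => 1 / (y j - x i)) + u • Matrix.vecMulVec (fun i => 1 / x i) 1 := by
    ext i j
    simp only [Matrix.add_apply, Matrix.of_apply, Matrix.smul_apply, Matrix.vecMulVec_apply,
      Pi.one_apply, smul_eq_mul]
    ring
  rw [hrank_one, Matrix.det_add_smul_vecMulVec, det_cauchy_add_vecMulVec_inv x y hx hxy]
  ring

theorem stmt7 (N : ℕ) (x y : Fin N → ℂ)
    (hx : ∀ i, x i ≠ 0) (hy : ∀ j, y j ≠ 0)
    (hxy : ∀ i j, x i ≠ y j) (u : ℂ) :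
    Matrix.det (Matrix.of fun i j : Fin N => 1 / (y j - x i) + u / x i)
    = Matrix.det (Matrix.of fun i j : Fin N => 1 / (y j - x i)) *
      (1 + u * (-1 + ∏ i, y i / x i)) :=
  stmt7_general N x y hx hxy u
end

section
/- Removal of degenerate kernel terms: Let Σ, Σ' be contours with measures dμ, dμ', let C(w,w') and D(w,w') be functions on Σ×Σ', and let B(w_1,...,w_N; w'_1,...,w'_N) be a function on Σ^N×(Σ')^N such that all relevant integrals converge absolutely, and such that for every 1 ≤ i, i' ≤ N and all fixed w_ℓ (ℓ≠i), w'_{ℓ'} (ℓ'≠i'), the double integral ∫_Σ ∫_{Σ'} B(w_1,...,w_N; w'_1,...,w'_N) D(w_i, w'_{i'}) dμ(w_i) dμ'(w'_{i'}) = 0. Then ∫_{Σ^N}∫_{(Σ')^N} B · det[ C(w_i,w'_{i'}) + D(w_i,w'_{i'}) ]_{i,i'=1}^N ∏ dμ dμ' = ∫_{Σ^N}∫_{(Σ')^N} B · det[ C(w_i,w'_{i'}) ]_{i,i'=1}^N ∏ dμ dμ'. -/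
open Finset MeasureTheory

private lemma prod_add_eq_sum_bool {n : ℕ} (c d : Fin n → ℂ) :
    (∏ i, (c i + d i)) = ∑ f : Fin n → Bool, ∏ i, (if f i then c i else d i) := by
  classical
  rw [Finset.prod_add, Finset.powerset_univ]
  refine Fintype.sum_equiv ⟨fun t => fun i => decide (i ∈ t),
      fun f => Finset.univ.filter fun i => f i = true,
      fun t => by ext i; simp, fun f => by funext i; simp⟩
    _ _ fun t => ?_
  simp only [Equiv.coe_fn_mk]
  rw [Finset.prod_ite]
  congr 1
  · congr 1; ext i; simp
  · congr 1; ext i; simp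

private lemma det_expand {N : ℕ} (M : Matrix (Fin N) (Fin N) ℂ) :
    M.det = ∑ σ : Equiv.Perm (Fin N),
      ((Equiv.Perm.sign σ : ℤ) : ℂ) * ∏ i, M i (σ i) := by
  rw [← Matrix.det_transpose, Matrix.det_apply']
  simp [Matrix.transpose_apply]

private lemma vanish {α β : Type*} [MeasurableSpace α] [MeasurableSpace β]
    (μ : Measure α) (μ' : Measure β) [SigmaFinite μ] [SigmaFinite μ'] {N : ℕ}
    (C D : α → β → ℂ) (B : (Fin N → α) → (Fin N → β) → ℂ)
    (σ : Equiv.Perm (Fin N)) (f : Fin N → Bool)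
    (hI : Integrable (fun p : (Fin N → α) × (Fin N → β) =>
          B p.1 p.2 * ∏ i, (if f i then C (p.1 i) (p.2 (σ i)) else D (p.1 i) (p.2 (σ i))))
        ((Measure.pi fun _ : Fin N => μ).prod (Measure.pi fun _ : Fin N => μ')))
    (hzero : ∀ (i i' : Fin N) (w : Fin N → α) (w' : Fin N → β),
      (∫ a, ∫ b, B (Function.update w i a) (Function.update w' i' b) * D a b ∂μ' ∂μ) = 0)
    (i₀ : Fin N) (hf : f i₀ = false) :
    (∫ p, B p.1 p.2 * ∏ i, (if f i then C (p.1 i) (p.2 (σ i)) else D (p.1 i) (p.2 (σ i)))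
      ∂((Measure.pi fun _ : Fin N => μ).prod (Measure.pi fun _ : Fin N => μ'))) = 0 := by
  classical
  obtain ⟨n, rfl⟩ : ∃ n, N = n + 1 := ⟨N - 1, (Nat.succ_pred_eq_of_pos i₀.pos).symm⟩
  set G : (Fin (n+1) → α) × (Fin (n+1) → β) → ℂ := fun p =>
    B p.1 p.2 * ∏ i, (if f i then C (p.1 i) (p.2 (σ i)) else D (p.1 i) (p.2 (σ i))) with hG
  set PN : Measure (Fin (n+1) → α) := Measure.pi fun _ => μ with hPN
  set PN' : Measure (Fin (n+1) → β) := Measure.pi fun _ => μ' with hPN'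
  set A : Measure (Fin n → α) := Measure.pi fun _ => μ with hA
  set A' : Measure (Fin n → β) := Measure.pi fun _ => μ' with hA'
  set T : ((Fin n → α) × (Fin n → β)) × (α × β) → (Fin (n+1) → α) × (Fin (n+1) → β) :=
    fun q => (i₀.insertNth q.2.1 q.1.1, (σ i₀).insertNth q.2.2 q.1.2) with hT
  -- the rearranging map is measure preserving
  have mpR : MeasurePreserving
      (fun q : ((Fin n → α) × (Fin n → β)) × (α × β) => ((q.2.1, q.1.1), (q.2.2, q.1.2)))
      ((A.prod A').prod (μ.prod μ')) ((μ.prod A).prod (μ'.prod A')) := by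
    have h1 := Measure.measurePreserving_swap (μ := A.prod A') (ν := μ.prod μ')
    have h2 := measurePreserving_prodAssoc μ μ' (A.prod A')
    have h3 := (MeasurePreserving.id μ).prod
      (MeasurePreserving.symm MeasurableEquiv.prodAssoc (measurePreserving_prodAssoc μ' A A'))
    have h4 := (MeasurePreserving.id μ).prod
      ((Measure.measurePreserving_swap (μ := μ') (ν := A)).prod (MeasurePreserving.id A'))
    have h5 := (MeasurePreserving.id μ).prod (measurePreserving_prodAssoc A μ' A')
    have h6 := MeasurePreserving.symm MeasurableEquiv.prodAssoc
      (measurePreserving_prodAssoc μ A (μ'.prod A'))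
    exact h6.comp (h5.comp (h4.comp (h3.comp (h2.comp h1))))
  have mp₁ : MeasurePreserving
      (MeasurableEquiv.piFinSuccAbove (fun _ : Fin (n+1) => α) i₀).symm (μ.prod A) PN :=
    MeasurePreserving.symm _ (measurePreserving_piFinSuccAbove (fun _ : Fin (n+1) => μ) i₀)
  have mp₂ : MeasurePreserving
      (MeasurableEquiv.piFinSuccAbove (fun _ : Fin (n+1) => β) (σ i₀)).symm (μ'.prod A') PN' :=
    MeasurePreserving.symm _ (measurePreserving_piFinSuccAbove (fun _ : Fin (n+1) => μ') (σ i₀))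
  have mpT : MeasurePreserving T ((A.prod A').prod (μ.prod μ')) (PN.prod PN') :=
    (mp₁.prod mp₂).comp mpR
  have hGmeas : AEStronglyMeasurable G (PN.prod PN') := hI.aestronglyMeasurable
  have hGT : Integrable (fun q => G (T q)) ((A.prod A').prod (μ.prod μ')) :=
    (mpT.integrable_comp hGmeas).2 hI
  have key : ∀ (u : Fin n → α) (v : Fin n → β),
      (∫ a, ∫ b, G (i₀.insertNth a u, (σ i₀).insertNth b v) ∂μ' ∂μ) = 0 := by
    intro u v
    rcases isEmpty_or_nonempty α with hα | hα
    · simp [Measure.eq_zero_of_isEmpty μ]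
    rcases isEmpty_or_nonempty β with hβ | hβ
    · simp [Measure.eq_zero_of_isEmpty μ']
    obtain ⟨a₀⟩ := hα
    obtain ⟨b₀⟩ := hβ
    set W : Fin (n+1) → α := i₀.insertNth a₀ u with hW
    set W' : Fin (n+1) → β := (σ i₀).insertNth b₀ v with hW'
    set c : ℂ := ∏ ℓ ∈ Finset.univ.erase i₀,
      (if f ℓ then C (W ℓ) (W' (σ ℓ)) else D (W ℓ) (W' (σ ℓ))) with hc
    have hpt : ∀ a b, G (i₀.insertNth a u, (σ i₀).insertNth b v)
        = c * (B (Function.update W i₀ a) (Function.update W' (σ i₀) b) * D a b) := by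
      intro a b
      have hu : Function.update W i₀ a = i₀.insertNth a u := by
        rw [hW]; exact Fin.update_insertNth _ _ _ _
      have hv : Function.update W' (σ i₀) b = (σ i₀).insertNth b v := by
        rw [hW']; exact Fin.update_insertNth _ _ _ _
      have hprod : (∏ i, (if f i then
              C ((i₀.insertNth a u : Fin (n+1) → α) i) (((σ i₀).insertNth b v : Fin (n+1) → β) (σ i))
            else
              D ((i₀.insertNth a u : Fin (n+1) → α) i) (((σ i₀).insertNth b v : Fin (n+1) → β) (σ i))))
          = D a b * c := by
        rw [← Finset.mul_prod_erase Finset.univ _ (Finset.mem_univ i₀)]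
        congr 1
        · rw [hf]
          simp [Fin.insertNth_apply_same]
        · refine Finset.prod_congr rfl fun ℓ hℓ => ?_
          have hℓi : ℓ ≠ i₀ := (Finset.mem_erase.mp hℓ).1
          have h₁ : (i₀.insertNth a u : Fin (n+1) → α) ℓ = W ℓ := by
            rw [← hu, Function.update_of_ne hℓi]
          have h₂ : ((σ i₀).insertNth b v : Fin (n+1) → β) (σ ℓ) = W' (σ ℓ) := by
            rw [← hv, Function.update_of_ne (fun h => hℓi (σ.injective h))]
          rw [h₁, h₂]
      show B _ _ * _ = _
      rw [hprod, hu, hv]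
      ring
    simp_rw [hpt, integral_const_mul]
    rw [hzero i₀ (σ i₀) W W', mul_zero]
  rw [show (∫ p, B p.1 p.2 *
        ∏ i, (if f i then C (p.1 i) (p.2 (σ i)) else D (p.1 i) (p.2 (σ i))) ∂(PN.prod PN'))
      = ∫ p, G p ∂(PN.prod PN') from rfl]
  rw [← mpT.map_eq, integral_map mpT.measurable.aemeasurable (by rwa [mpT.map_eq])]
  rw [integral_prod _ hGT]
  refine integral_eq_zero_of_ae ?_
  filter_upwards [hGT.prod_right_ae] with uv huv
  rw [integral_prod _ huv]
  exact key uv.1 uv.2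

set_option maxHeartbeats 1000000 in
/-- Lemma 2.4 of the paper: removal of degenerate kernel terms `D` from a determinant
under an orthogonality (vanishing double integral) condition. -/
theorem stmt13 {α β : Type*} [MeasurableSpace α] [MeasurableSpace β]
    (μ : Measure α) (μ' : Measure β) [SigmaFinite μ] [SigmaFinite μ'] (N : ℕ)
    (C D : α → β → ℂ) (B : (Fin N → α) → (Fin N → β) → ℂ)
    (hInt : ∀ (σ : Equiv.Perm (Fin N)) (f : Fin N → Bool),
      Integrable (fun p : (Fin N → α) × (Fin N → β) =>
          B p.1 p.2 * ∏ i, (if f i then C (p.1 i) (p.2 (σ i)) else D (p.1 i) (p.2 (σ i))))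
        ((Measure.pi fun _ : Fin N => μ).prod (Measure.pi fun _ : Fin N => μ')))
    (hzero : ∀ (i i' : Fin N) (w : Fin N → α) (w' : Fin N → β),
      (∫ a, ∫ b, B (Function.update w i a) (Function.update w' i' b) * D a b ∂μ' ∂μ) = 0) :
    (∫ w, ∫ w', B w w' *
        Matrix.det (Matrix.of fun i i' : Fin N => C (w i) (w' i') + D (w i) (w' i'))
        ∂(Measure.pi fun _ : Fin N => μ') ∂(Measure.pi fun _ : Fin N => μ))
    = ∫ w, ∫ w', B w w' *
        Matrix.det (Matrix.of fun i i' : Fin N => C (w i) (w' i'))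
        ∂(Measure.pi fun _ : Fin N => μ') ∂(Measure.pi fun _ : Fin N => μ) := by
  classical
  set Pμ : Measure (Fin N → α) := Measure.pi fun _ => μ with hPμ
  set Pν : Measure (Fin N → β) := Measure.pi fun _ => μ' with hPν
  set F : Equiv.Perm (Fin N) → (Fin N → Bool) → ((Fin N → α) × (Fin N → β)) → ℂ :=
    fun σ f p => B p.1 p.2 *
      ∏ i, (if f i then C (p.1 i) (p.2 (σ i)) else D (p.1 i) (p.2 (σ i))) with hF
  set ε : Equiv.Perm (Fin N) → ℂ := fun σ => ((Equiv.Perm.sign σ : ℤ) : ℂ) with hε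
  have hexp1 : ∀ (w : Fin N → α) (w' : Fin N → β), B w w' *
      Matrix.det (Matrix.of fun i i' : Fin N => C (w i) (w' i') + D (w i) (w' i'))
      = ∑ σ : Equiv.Perm (Fin N), ∑ f : Fin N → Bool, ε σ * F σ f (w, w') := by
    intro w w'
    rw [det_expand, Finset.mul_sum]
    refine Finset.sum_congr rfl fun σ _ => ?_
    have : (∏ i, (Matrix.of fun i i' : Fin N => C (w i) (w' i') + D (w i) (w' i')) i (σ i))
        = ∑ f : Fin N → Bool,
          ∏ i, (if f i then C (w i) (w' (σ i)) else D (w i) (w' (σ i))) :=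
      prod_add_eq_sum_bool (fun i => C (w i) (w' (σ i))) (fun i => D (w i) (w' (σ i)))
    rw [this, Finset.mul_sum, Finset.mul_sum]
    refine Finset.sum_congr rfl fun f _ => ?_
    simp only [hF, hε]
    ring
  have hexp2 : ∀ (w : Fin N → α) (w' : Fin N → β), B w w' *
      Matrix.det (Matrix.of fun i i' : Fin N => C (w i) (w' i'))
      = ∑ σ : Equiv.Perm (Fin N), ε σ * F σ (fun _ => true) (w, w') := by
    intro w w'
    rw [det_expand, Finset.mul_sum]
    refine Finset.sum_congr rfl fun σ _ => ?_
    simp only [hF, hε, if_true, Matrix.of_apply]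
    ring
  have hTot1 : Integrable
      (fun p : (Fin N → α) × (Fin N → β) => ∑ σ : Equiv.Perm (Fin N),
        ∑ f : Fin N → Bool, ε σ * F σ f p) (Pμ.prod Pν) := by
    refine integrable_finset_sum _ fun σ _ => ?_
    exact integrable_finset_sum _ fun f _ => (hInt σ f).const_mul _
  have hTot2 : Integrable
      (fun p : (Fin N → α) × (Fin N → β) => ∑ σ : Equiv.Perm (Fin N),
        ε σ * F σ (fun _ => true) p) (Pμ.prod Pν) :=
    integrable_finset_sum _ fun σ _ => (hInt σ _).const_mul _
  have hInt1 : Integrable (fun p : (Fin N → α) × (Fin N → β) => B p.1 p.2 *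
      Matrix.det (Matrix.of fun i i' : Fin N => C (p.1 i) (p.2 i') + D (p.1 i) (p.2 i')))
      (Pμ.prod Pν) := by
    have : (fun p : (Fin N → α) × (Fin N → β) => B p.1 p.2 *
        Matrix.det (Matrix.of fun i i' : Fin N => C (p.1 i) (p.2 i') + D (p.1 i) (p.2 i')))
        = fun p => ∑ σ : Equiv.Perm (Fin N), ∑ f : Fin N → Bool, ε σ * F σ f p :=
      funext fun p => hexp1 p.1 p.2
    rw [this]; exact hTot1
  have hInt2 : Integrable (fun p : (Fin N → α) × (Fin N → β) => B p.1 p.2 *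
      Matrix.det (Matrix.of fun i i' : Fin N => C (p.1 i) (p.2 i')))
      (Pμ.prod Pν) := by
    have : (fun p : (Fin N → α) × (Fin N → β) => B p.1 p.2 *
        Matrix.det (Matrix.of fun i i' : Fin N => C (p.1 i) (p.2 i')))
        = fun p => ∑ σ : Equiv.Perm (Fin N), ε σ * F σ (fun _ => true) p :=
      funext fun p => hexp2 p.1 p.2
    rw [this]; exact hTot2
  have hvan : ∀ (σ : Equiv.Perm (Fin N)) (f : Fin N → Bool), f ≠ (fun _ => true) →
      (∫ p, F σ f p ∂(Pμ.prod Pν)) = 0 := by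
    intro σ f hne
    have : ∃ i, f i = false := by
      by_contra h
      push_neg at h
      exact hne (funext fun i => by simpa using h i)
    obtain ⟨i₀, hi₀⟩ := this
    exact vanish μ μ' C D B σ f (hInt σ f) hzero i₀ hi₀
  calc (∫ w, ∫ w', B w w' *
        Matrix.det (Matrix.of fun i i' : Fin N => C (w i) (w' i') + D (w i) (w' i')) ∂Pν ∂Pμ)
      = ∫ p, B p.1 p.2 *
        Matrix.det (Matrix.of fun i i' : Fin N => C (p.1 i) (p.2 i') + D (p.1 i) (p.2 i'))
          ∂(Pμ.prod Pν) :=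
        integral_integral (f := fun w w' => B w w' *
          Matrix.det (Matrix.of fun i i' : Fin N => C (w i) (w' i') + D (w i) (w' i')))
          (by exact hInt1)
    _ = ∫ p, (∑ σ : Equiv.Perm (Fin N), ∑ f : Fin N → Bool, ε σ * F σ f p) ∂(Pμ.prod Pν) := by
        congr 1
        exact funext fun p => hexp1 p.1 p.2
    _ = ∑ σ : Equiv.Perm (Fin N), ∑ f : Fin N → Bool, ε σ * ∫ p, F σ f p ∂(Pμ.prod Pν) := by
        rw [integral_finset_sum _ fun σ _ =>
          integrable_finset_sum _ fun f _ => (hInt σ f).const_mul _]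
        refine Finset.sum_congr rfl fun σ _ => ?_
        rw [integral_finset_sum _ fun f _ => (hInt σ f).const_mul _]
        exact Finset.sum_congr rfl fun f _ => integral_const_mul _ _
    _ = ∑ σ : Equiv.Perm (Fin N), ε σ * ∫ p, F σ (fun _ => true) p ∂(Pμ.prod Pν) := by
        refine Finset.sum_congr rfl fun σ _ => ?_
        refine Finset.sum_eq_single _ (fun f _ hfne => ?_) (fun h => absurd (Finset.mem_univ _) h)
        rw [hvan σ f hfne, mul_zero]
    _ = ∫ p, (∑ σ : Equiv.Perm (Fin N), ε σ * F σ (fun _ => true) p) ∂(Pμ.prod Pν) := by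
        rw [integral_finset_sum _ fun σ _ => (hInt σ _).const_mul _]
        exact Finset.sum_congr rfl fun σ _ => (integral_const_mul _ _).symm
    _ = ∫ p, B p.1 p.2 *
        Matrix.det (Matrix.of fun i i' : Fin N => C (p.1 i) (p.2 i')) ∂(Pμ.prod Pν) := by
        congr 1
        exact funext fun p => (hexp2 p.1 p.2).symm
    _ = ∫ w, ∫ w', B w w' *
        Matrix.det (Matrix.of fun i i' : Fin N => C (w i) (w' i')) ∂Pν ∂Pμ :=
        (integral_integral (f := fun w w' => B w w' *
          Matrix.det (Matrix.of fun i i' : Fin N => C (w i) (w' i')))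
          (by exact hInt2)).symm
end

section
/- Hadamard-type bound for a block Cauchy determinant: Let ξ^{(1)}_1,...,ξ^{(1)}_{k_1}, η^{(1)}_1,...,η^{(1)}_{k_1}, ξ^{(2)}_1,...,ξ^{(2)}_{k_2}, η^{(2)}_1,...,η^{(2)}_{k_2} be complex numbers lying on fixed disjoint contours, with δ > 0 a lower bound for the distance from any one of these points to all other contours (other than the one it lies on). Then |B| ≤ k_1^{k_1/2} k_2^{k_2/2} (k_1+k_2)^{(k_1+k_2)/2} · δ^{−2(k_1+k_2)}, where B := ∏_{ℓ=1}^2 [ (Δ(ξ^{(ℓ)}))^2 (Δ(η^{(ℓ)}))^2 / (Δ(ξ^{(ℓ)}; η^{(ℓ)}))^2 ] · Δ(ξ^{(1)}; η^{(2)}) Δ(η^{(1)}; ξ^{(2)}) / ( Δ(ξ^{(1)}; ξ^{(2)}) Δ(η^{(1)}; η^{(2)}) ). -/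
open Finset

/-- `Δ(W) = ∏_{i<j} (w_j − w_i)`. -/
noncomputable def Vand {k : ℕ} (W : Fin k → ℂ) : ℂ :=
  ∏ j, ∏ i ∈ Finset.Iio j, (W j - W i)

/-- `Δ(W;W') = ∏_{i,i'} (w_i − w'_{i'})`. -/
noncomputable def VandP {k k' : ℕ} (W : Fin k → ℂ) (W' : Fin k' → ℂ) : ℂ :=
  ∏ i, ∏ i', (W i - W' i')

/-!
Up to sign, `B` is the product of the three Cauchy determinants `det [1 / (xᵢ - yⱼ)]` for
`(x, y) = (ξ¹, η¹)`, `(ξ², η²)` and `((ξ¹, η²), (η¹, ξ²))`, by Cauchy's formula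
`|det [1 / (xᵢ - yⱼ)]| = |Δ(x) Δ(y)| / |Δ(x; y)|`. The separation hypotheses bound every entry of
these matrices by `δ⁻¹`, and Hadamard's inequality bounds the modulus of a `k × k` determinant
whose entries have modulus at most `c` by `(√k c) ^ k`.
-/

open Polynomial

theorem OrthonormalBasis.norm_det_le_prod_norm {𝕜 E : Type*} [RCLike 𝕜] [NormedAddCommGroup E]
    [InnerProductSpace 𝕜 E] {n : ℕ} (e : OrthonormalBasis (Fin n) 𝕜 E) (v : Fin n → E) :
    ‖e.toBasis.det v‖ ≤ ∏ i, ‖v i‖ := by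
  have : FiniteDimensional 𝕜 E := e.toBasis.finiteDimensional_of_finite
  have hcard : Module.finrank 𝕜 E = Fintype.card (Fin n) := Module.finrank_eq_card_basis e.toBasis
  set b := InnerProductSpace.gramSchmidtOrthonormalBasis hcard v
  have hsplit : e.toBasis.det v = e.toBasis.det b * b.toBasis.det v := by
    rw [Module.Basis.det_apply, Module.Basis.det_apply, Module.Basis.det_apply, ← Matrix.det_mul,
      ← b.coe_toBasis, Module.Basis.toMatrix_mul_toMatrix]
  rw [hsplit, norm_mul, e.det_to_matrix_orthonormalBasis, one_mul,
    InnerProductSpace.gramSchmidtOrthonormalBasis_det, norm_prod]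
  refine prod_le_prod (fun _ _ ↦ norm_nonneg _) fun i _ ↦ ?_
  simpa [b.orthonormal.1 i] using norm_inner_le_norm (𝕜 := 𝕜) (b i) (v i)

theorem Matrix.norm_det_le_of_forall_norm_le {𝕜 : Type*} [RCLike 𝕜] {n : ℕ}
    (A : Matrix (Fin n) (Fin n) 𝕜) {c : ℝ} (hc : 0 ≤ c) (hA : ∀ i j, ‖A i j‖ ≤ c) :
    ‖A.det‖ ≤ (√n * c) ^ n := by
  let col : Fin n → EuclideanSpace 𝕜 (Fin n) := fun j ↦ WithLp.toLp 2 fun i ↦ A i j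
  have hdet : (EuclideanSpace.basisFun (Fin n) 𝕜).toBasis.det col = A.det := by
    rw [Module.Basis.det_apply]
    congr 1
  have hcol : ∀ j, ‖col j‖ ≤ √n * c := fun j ↦ by
    rw [EuclideanSpace.norm_eq, ← Real.sqrt_sq hc, ← Real.sqrt_mul (Nat.cast_nonneg n)]
    refine Real.sqrt_le_sqrt ?_
    calc ∑ i, ‖A i j‖ ^ 2 ≤ ∑ _i : Fin n, c ^ 2 :=
          sum_le_sum fun i _ ↦ pow_le_pow_left₀ (norm_nonneg _) (hA i j) 2
      _ = n * c ^ 2 := by simp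
  calc ‖A.det‖ ≤ ∏ j, ‖col j‖ := hdet ▸ OrthonormalBasis.norm_det_le_prod_norm _ col
    _ ≤ ∏ _j : Fin n, √n * c := prod_le_prod (fun _ _ ↦ norm_nonneg _) fun j _ ↦ hcol j
    _ = (√n * c) ^ n := by simp

theorem Fin.prod_Iio_natAdd {M : Type*} [CommMonoid M] {m n : ℕ} (f : Fin (m + n) → M)
    (j : Fin n) :
    ∏ i < Fin.natAdd m j, f i = (∏ i, f (Fin.castAdd n i)) * ∏ i < j, f (Fin.natAdd m i) := by
  simp only [← Finset.filter_gt_eq_Iio, Finset.prod_filter, Fin.prod_univ_add]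
  have hlt : ∀ i : Fin m, Fin.castAdd n i < Fin.natAdd m j := fun i ↦ by
    simp only [Fin.lt_def, Fin.val_castAdd, Fin.val_natAdd]; omega
  simp [hlt, Fin.natAdd_lt_natAdd_iff]

theorem Finset.prod_erase_univ_eq_prod_Iio_mul_prod_Ioi {α M : Type*} [CommMonoid M]
    [Fintype α] [LinearOrder α] [LocallyFiniteOrderBot α] [LocallyFiniteOrderTop α]
    [DecidableEq α] (f : α → M) (i : α) :
    ∏ k ∈ univ.erase i, f k = (∏ k ∈ Iio i, f k) * ∏ k ∈ Ioi i, f k := by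
  rw [← prod_union (disjoint_left.2 fun k hk hk' ↦ (mem_Iio.1 hk).asymm (mem_Ioi.1 hk'))]
  congr 1
  ext k
  simp only [mem_erase, mem_univ, and_true, mem_union, mem_Iio, mem_Ioi]
  exact ne_iff_lt_or_gt

theorem Matrix.of_eval_eq_vandermonde_mul {R : Type*} [CommRing R] {n : ℕ} (v : Fin n → R)
    (p : Fin n → R[X]) (hp : ∀ j, (p j).natDegree < n) :
    Matrix.of (fun i j ↦ (p j).eval (v i)) =
      Matrix.vandermonde v * Matrix.of (fun (i j : Fin n) ↦ (p j).coeff i) := by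
  ext i j
  simp only [Matrix.mul_apply, Matrix.of_apply, Matrix.vandermonde_apply,
    eval_eq_sum_range' (hp j), ← Fin.sum_univ_eq_sum_range (fun k ↦ (p j).coeff k * v i ^ k)]
  exact sum_congr rfl fun k _ ↦ mul_comm _ _

theorem vand_eq_det_vandermonde {n : ℕ} (x : Fin n → ℂ) : Vand x = (Matrix.vandermonde x).det := by
  rw [Matrix.det_vandermonde, Vand]
  exact prod_comm' fun i j ↦ by simp

theorem vand_append {m n : ℕ} (a : Fin m → ℂ) (b : Fin n → ℂ) :
    Vand (Fin.append a b) = Vand a * Vand b * VandP b a := by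
  simp only [Vand, VandP, Fin.prod_univ_add, Fin.prod_Iio_castAdd, Fin.prod_Iio_natAdd,
    Fin.append_left, Fin.append_right, prod_mul_distrib]
  ring

theorem vandP_append_left {m n k : ℕ} (a : Fin m → ℂ) (b : Fin n → ℂ) (z : Fin k → ℂ) :
    VandP (Fin.append a b) z = VandP a z * VandP b z := by
  simp only [VandP, Fin.prod_univ_add, Fin.append_left, Fin.append_right]

theorem vandP_append_right {m n k : ℕ} (z : Fin k → ℂ) (a : Fin m → ℂ) (b : Fin n → ℂ) :
    VandP z (Fin.append a b) = VandP z a * VandP z b := by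
  simp only [VandP, Fin.prod_univ_add, Fin.append_left, Fin.append_right, prod_mul_distrib]

theorem norm_vandP_comm {m n : ℕ} (x : Fin m → ℂ) (y : Fin n → ℂ) :
    ‖VandP x y‖ = ‖VandP y x‖ := by
  simp only [VandP, norm_prod]
  rw [prod_comm]
  simp only [norm_sub_rev]

theorem norm_prod_prod_erase_sub_eq_norm_vand_sq {n : ℕ} (y : Fin n → ℂ) :
    ‖∏ i, ∏ k ∈ univ.erase i, (y i - y k)‖ = ‖Vand y‖ ^ 2 := by
  have hlow : ∏ i, ∏ k ∈ Iio i, ‖y i - y k‖ = ‖Vand y‖ := by simp [Vand, norm_prod]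
  have hhigh : ∏ i, ∏ k ∈ Ioi i, ‖y i - y k‖ = ‖Vand y‖ := by
    rw [← hlow, prod_comm' fun i k ↦ (by simp : i ∈ univ ∧ k ∈ Ioi i ↔ i ∈ Iio k ∧ k ∈ univ)]
    simp only [norm_sub_rev (y _) (y _)]
  simp only [norm_prod, norm_mul, prod_erase_univ_eq_prod_Iio_mul_prod_Ioi, prod_mul_distrib, hlow,
    hhigh, sq]

noncomputable def cauchyMatrix {K : Type*} [Field K] {n : ℕ} (x y : Fin n → K) :
    Matrix (Fin n) (Fin n) K :=
  Matrix.of fun i j ↦ (x i - y j)⁻¹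

/- With `qⱼ = ∏_{k ≠ j} (X - yₖ)`, the entry `1 / (xᵢ - yⱼ)` is `qⱼ(xᵢ) / ∏ₖ (xᵢ - yₖ)`, while the
matrix `[qⱼ(yᵢ)]` is diagonal; both factor through the coefficient matrix of the `qⱼ`. -/
theorem det_cauchyMatrix_mul_vandP_mul_vand {n : ℕ} (x y : Fin n → ℂ) (hxy : ∀ i j, x i ≠ y j) :
    (cauchyMatrix x y).det * VandP x y * Vand y =
      Vand x * ∏ i, ∏ k ∈ univ.erase i, (y i - y k) := by
  let q : Fin n → ℂ[X] := fun j ↦ ∏ k ∈ univ.erase j, (X - C (y k))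
  have hq : ∀ j t, (q j).eval t = ∏ k ∈ univ.erase j, (t - y k) := fun j t ↦ by
    simp [q, eval_prod]
  have hdeg : ∀ j, (q j).natDegree < n := fun j ↦ by
    simp only [q, natDegree_finsetProd_X_sub_C_eq_card, card_erase_of_mem (mem_univ j),
      card_univ, Fintype.card_fin]
    exact Nat.sub_lt j.pos one_pos
  set K : Matrix (Fin n) (Fin n) ℂ := Matrix.of fun m j ↦ (q j).coeff m
  have hx : cauchyMatrix x y =
      Matrix.diagonal (fun i ↦ (∏ k, (x i - y k))⁻¹) * (Matrix.vandermonde x * K) := by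
    rw [← Matrix.of_eval_eq_vandermonde_mul x q hdeg]
    ext i j
    rw [Matrix.diagonal_mul, Matrix.of_apply, hq, ← mul_prod_erase univ _ (mem_univ j), mul_inv,
      mul_assoc, inv_mul_cancel₀ (prod_ne_zero_iff.2 fun k _ ↦ sub_ne_zero.2 (hxy i k)), mul_one]
    rfl
  have hy : Matrix.vandermonde y * K = Matrix.diagonal fun i ↦ ∏ k ∈ univ.erase i, (y i - y k) := by
    rw [← Matrix.of_eval_eq_vandermonde_mul y q hdeg]
    ext i j
    rw [Matrix.of_apply, hq]
    by_cases hij : i = j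
    · rw [hij, Matrix.diagonal_apply_eq]
    · rw [Matrix.diagonal_apply_ne _ hij]
      exact prod_eq_zero (mem_erase.2 ⟨hij, mem_univ i⟩) (sub_self _)
  have hP : (∏ i, (∏ k, (x i - y k))⁻¹) * VandP x y = 1 := by
    rw [prod_inv_distrib, VandP]
    exact inv_mul_cancel₀ (prod_ne_zero_iff.2 fun i _ ↦ prod_ne_zero_iff.2 fun k _ ↦
      sub_ne_zero.2 (hxy i k))
  have hdetK := congrArg Matrix.det hy
  rw [Matrix.det_mul, Matrix.det_diagonal, ← vand_eq_det_vandermonde] at hdetK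
  rw [hx, Matrix.det_mul, Matrix.det_mul, Matrix.det_diagonal, ← vand_eq_det_vandermonde, ← hdetK]
  linear_combination (Vand x * K.det * Vand y) * hP

theorem norm_det_cauchyMatrix_mul_norm_vandP {n : ℕ} (x y : Fin n → ℂ) (hxy : ∀ i j, x i ≠ y j) :
    ‖(cauchyMatrix x y).det‖ * ‖VandP x y‖ = ‖Vand x‖ * ‖Vand y‖ := by
  by_cases hy : Vand y = 0
  · obtain ⟨i, j, hyij, hij⟩ :=
      Matrix.det_vandermonde_eq_zero_iff.1 (vand_eq_det_vandermonde y ▸ hy)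
    have hC : (cauchyMatrix x y).det = 0 :=
      Matrix.det_zero_of_column_eq hij fun k ↦ by simp [cauchyMatrix, hyij]
    simp [hC, hy]
  · have h := congrArg norm (det_cauchyMatrix_mul_vandP_mul_vand x y hxy)
    rw [norm_mul, norm_mul, norm_mul, norm_prod_prod_erase_sub_eq_norm_vand_sq, sq,
      ← mul_assoc] at h
    exact mul_right_cancel₀ (norm_ne_zero_iff.2 hy) h

theorem norm_det_cauchyMatrix {n : ℕ} (x y : Fin n → ℂ) (hxy : ∀ i j, x i ≠ y j) :
    ‖(cauchyMatrix x y).det‖ = ‖Vand x‖ * ‖Vand y‖ / ‖VandP x y‖ := by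
  have hP : ‖VandP x y‖ ≠ 0 := by
    simpa [VandP, prod_eq_zero_iff, sub_eq_zero] using hxy
  rw [eq_div_iff hP, norm_det_cauchyMatrix_mul_norm_vandP x y hxy]

theorem norm_det_cauchyMatrix_le {𝕜 : Type*} [RCLike 𝕜] {n : ℕ} (x y : Fin n → 𝕜) {δ : ℝ}
    (hδ : 0 < δ) (h : ∀ i j, δ ≤ ‖x i - y j‖) : ‖(cauchyMatrix x y).det‖ ≤ (√n * δ⁻¹) ^ n :=
  Matrix.norm_det_le_of_forall_norm_le _ (inv_nonneg.2 hδ.le) fun i j ↦ by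
    simpa [cauchyMatrix] using inv_anti₀ hδ (h i j)

noncomputable def blockCauchyFactor {k₁ k₂ : ℕ} (ξ₁ η₁ : Fin k₁ → ℂ) (ξ₂ η₂ : Fin k₂ → ℂ) : ℂ :=
  Vand ξ₁ ^ 2 * Vand η₁ ^ 2 / VandP ξ₁ η₁ ^ 2 *
    (Vand ξ₂ ^ 2 * Vand η₂ ^ 2 / VandP ξ₂ η₂ ^ 2) *
    (VandP ξ₁ η₂ * VandP η₁ ξ₂ / (VandP ξ₁ ξ₂ * VandP η₁ η₂))

theorem norm_blockCauchyFactor {k₁ k₂ : ℕ} (ξ₁ η₁ : Fin k₁ → ℂ) (ξ₂ η₂ : Fin k₂ → ℂ)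
    (h₁ : ∀ i j, ξ₁ i ≠ η₁ j) (h₂ : ∀ i j, ξ₂ i ≠ η₂ j)
    (h₁₂ : ∀ i j, Fin.append ξ₁ η₂ i ≠ Fin.append η₁ ξ₂ j) :
    ‖blockCauchyFactor ξ₁ η₁ ξ₂ η₂‖ = ‖(cauchyMatrix ξ₁ η₁).det‖ * ‖(cauchyMatrix ξ₂ η₂).det‖ *
      ‖(cauchyMatrix (Fin.append ξ₁ η₂) (Fin.append η₁ ξ₂)).det‖ := by
  rw [norm_det_cauchyMatrix _ _ h₁, norm_det_cauchyMatrix _ _ h₂, norm_det_cauchyMatrix _ _ h₁₂,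
    vand_append, vand_append, vandP_append_left, vandP_append_right, vandP_append_right]
  simp only [blockCauchyFactor, norm_mul, norm_div, norm_pow]
  rw [norm_vandP_comm η₂ ξ₁, norm_vandP_comm ξ₂ η₁, norm_vandP_comm η₂ η₁, norm_vandP_comm η₂ ξ₂]
  ring

theorem stmt14_general (k1 k2 : ℕ)
    (ξ1 η1 : Fin k1 → ℂ) (ξ2 η2 : Fin k2 → ℂ)
    (δ : ℝ) (hδ : 0 < δ)
    (h1 : ∀ i j, δ ≤ ‖ξ1 i - η1 j‖)
    (h2 : ∀ i j, δ ≤ ‖ξ2 i - η2 j‖)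
    (h5 : ∀ i j, δ ≤ ‖ξ1 i - ξ2 j‖)
    (h6 : ∀ i j, δ ≤ ‖η1 i - η2 j‖) :
    ‖(
      (Vand ξ1) ^ 2 * (Vand η1) ^ 2 / (VandP ξ1 η1) ^ 2 *
      ((Vand ξ2) ^ 2 * (Vand η2) ^ 2 / (VandP ξ2 η2) ^ 2) *
      (VandP ξ1 η2 * VandP η1 ξ2 / (VandP ξ1 ξ2 * VandP η1 η2)))‖
    ≤ (k1 : ℝ) ^ ((k1 : ℝ) / 2) * (k2 : ℝ) ^ ((k2 : ℝ) / 2) *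
      ((k1 : ℝ) + (k2 : ℝ)) ^ (((k1 : ℝ) + (k2 : ℝ)) / 2) *
      δ ^ (-(2 * ((k1 : ℤ) + (k2 : ℤ)))) := by
  have h12 : ∀ i j, δ ≤ ‖Fin.append ξ1 η2 i - Fin.append η1 ξ2 j‖ := by
    simp only [Fin.forall_fin_add, Fin.append_left, Fin.append_right]
    exact ⟨fun i ↦ ⟨h1 i, h5 i⟩, fun i ↦ ⟨fun j ↦ norm_sub_rev (η1 j) _ ▸ h6 j i,
      fun j ↦ norm_sub_rev (ξ2 j) _ ▸ h2 j i⟩⟩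
  have hne : ∀ {m n} {x : Fin m → ℂ} {y : Fin n → ℂ}, (∀ i j, δ ≤ ‖x i - y j‖) →
      ∀ i j, x i ≠ y j :=
    fun h i j hij ↦ by simpa [hij, hδ.not_ge] using h i j
  have hδpow : δ ^ (-(2 * ((k1 : ℤ) + k2))) = δ⁻¹ ^ (k1 + k2 + (k1 + k2)) := by
    rw [inv_pow, ← zpow_natCast, ← zpow_neg]
    push_cast
    ring_nf
  change ‖blockCauchyFactor ξ1 η1 ξ2 η2‖ ≤ _
  rw [norm_blockCauchyFactor _ _ _ _ (hne h1) (hne h2) (hne h12), hδpow]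
  calc _ ≤ (√k1 * δ⁻¹) ^ k1 * (√k2 * δ⁻¹) ^ k2 * (√(k1 + k2 : ℕ) * δ⁻¹) ^ (k1 + k2) := by
        gcongr
        exacts [norm_det_cauchyMatrix_le _ _ hδ h1, norm_det_cauchyMatrix_le _ _ hδ h2,
          norm_det_cauchyMatrix_le _ _ hδ h12]
    _ = _ := by
        simp only [← Nat.cast_add, Real.rpow_div_two_eq_sqrt _ (Nat.cast_nonneg _),
          Real.rpow_natCast]
        ring

/-- Hadamard-type bound for the block Cauchy determinant factor `B`. -/
theorem stmt14 (k1 k2 : ℕ) (hk1 : 0 < k1) (hk2 : 0 < k2)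
    (ξ1 η1 : Fin k1 → ℂ) (ξ2 η2 : Fin k2 → ℂ)
    (δ : ℝ) (hδ : 0 < δ)
    (h1 : ∀ i j, δ ≤ ‖ξ1 i - η1 j‖)
    (h2 : ∀ i j, δ ≤ ‖ξ2 i - η2 j‖)
    (h3 : ∀ i j, δ ≤ ‖ξ1 i - η2 j‖)
    (h4 : ∀ i j, δ ≤ ‖η1 i - ξ2 j‖)
    (h5 : ∀ i j, δ ≤ ‖ξ1 i - ξ2 j‖)
    (h6 : ∀ i j, δ ≤ ‖η1 i - η2 j‖) :
    ‖(
      (Vand ξ1) ^ 2 * (Vand η1) ^ 2 / (VandP ξ1 η1) ^ 2 *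
      ((Vand ξ2) ^ 2 * (Vand η2) ^ 2 / (VandP ξ2 η2) ^ 2) *
      (VandP ξ1 η2 * VandP η1 ξ2 / (VandP ξ1 ξ2 * VandP η1 η2)))‖
    ≤ (k1 : ℝ) ^ ((k1 : ℝ) / 2) * (k2 : ℝ) ^ ((k2 : ℝ) / 2) *
      ((k1 : ℝ) + (k2 : ℝ)) ^ (((k1 : ℝ) + (k2 : ℝ)) / 2) *
      δ ^ (-(2 * ((k1 : ℤ) + (k2 : ℤ)))) :=
  stmt14_general k1 k2 ξ1 η1 ξ2 η2 δ hδ h1 h2 h5 h6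
end
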